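/- arXiv:2507.04500 — 2 statements merged into one kernel-verified Lean document; each statement's English description precedes it below -/
import Mathlib

section
/- Let ψ : Fin M → (Fin d → ℂ) be unit vectors satisfying the 2-design frame identity, and set ν i = (d(d+1) : ℂ) • |ψ i⟩⟨ψ i| − (d : ℂ) • 1. Then for every matrix F : Matrix (Fin d) (Fin d) ℂ, ∑_{i=1}^{M} (⟨ψ i, F (ψ i)⟩ / M) • ν i = F. -/
noncomputable def cinner {ι : Type*} [Fintype ι] (u v : ι → ℂ) : ℂ :=
  ∑ x, (starRingEnd ℂ) (u x) * v x

noncomputable def outer {ι : Type*} (u : ι → ℂ) : Matrix ι ι ℂ :=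
  Matrix.of fun x y => u x * (starRingEnd ℂ) (u y)

/-!
Taking the trace of the frame identity, with `tr |ψ⟩⟨ψ| = ⟨ψ, ψ⟩ = 1`, shows that the average of
`⟨ψ i, F ψ i⟩` is `tr F / d`. Hence `∑ (⟨ψ i, F ψ i⟩ / M) • ν i` is `d(d+1)` times the frame
operator applied to `F`, which is `F + tr F • 1`, minus `tr F • 1`.
-/

open Finset Matrix

section TwoDesign

variable {α ι : Type*} [Fintype α] [Fintype ι] [DecidableEq ι]

def IsTwoDesign (ψ : α → ι → ℂ) : Prop :=
  ∀ X : Matrix ι ι ℂ,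
    (1 / (Fintype.card α : ℂ)) • ∑ i, cinner (ψ i) (X *ᵥ ψ i) • outer (ψ i) =
      (1 / ((Fintype.card ι : ℂ) * ((Fintype.card ι : ℂ) + 1))) • (X + X.trace • 1)

omit [DecidableEq ι] in
theorem trace_outer (u : ι → ℂ) : (outer u).trace = cinner u u := by
  simp only [Matrix.trace, Matrix.diag, outer, Matrix.of_apply, cinner, mul_comm]

theorem IsTwoDesign.average_cinner {ψ : α → ι → ℂ} (hψ : IsTwoDesign ψ)
    (hunit : ∀ i, cinner (ψ i) (ψ i) = 1) [Nonempty ι] (X : Matrix ι ι ℂ) :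
    (1 / (Fintype.card α : ℂ)) * ∑ i, cinner (ψ i) (X *ᵥ ψ i) =
      X.trace / Fintype.card ι := by
  have hd : (Fintype.card ι : ℂ) ≠ 0 := Nat.cast_ne_zero.mpr Fintype.card_ne_zero
  have h := congrArg Matrix.trace (hψ X)
  simp only [trace_smul, trace_sum, trace_add, trace_one, trace_outer, hunit,
    smul_eq_mul, mul_one] at h
  rw [h]
  field_simp
  ring

theorem IsTwoDesign.sum_smul_dual_eq {ψ : α → ι → ℂ} (hψ : IsTwoDesign ψ)
    (hunit : ∀ i, cinner (ψ i) (ψ i) = 1) (X : Matrix ι ι ℂ) :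
    ∑ i, (cinner (ψ i) (X *ᵥ ψ i) / Fintype.card α) •
        (((Fintype.card ι : ℂ) * ((Fintype.card ι : ℂ) + 1)) • outer (ψ i) -
          (Fintype.card ι : ℂ) • (1 : Matrix ι ι ℂ)) = X := by
  cases isEmpty_or_nonempty ι
  · exact Subsingleton.elim _ _
  set d : ℂ := (Fintype.card ι : ℂ)
  have hd : d ≠ 0 := Nat.cast_ne_zero.mpr Fintype.card_ne_zero
  have hd1 : d + 1 ≠ 0 := Nat.cast_add_one_ne_zero _
  calc _ = (d * (d + 1)) • ((1 / (Fintype.card α : ℂ)) •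
          ∑ i, cinner (ψ i) (X *ᵥ ψ i) • outer (ψ i)) -
        (((1 / (Fintype.card α : ℂ)) * ∑ i, cinner (ψ i) (X *ᵥ ψ i)) * d) • 1 := by
        simp only [smul_sub, sum_sub_distrib, smul_sum, smul_smul, mul_sum, sum_mul, sum_smul]
        congr 1 <;> refine sum_congr rfl fun i _ => ?_ <;> ring_nf
    _ = X := by
        rw [hψ X, hψ.average_cinner hunit, smul_smul, mul_one_div_cancel (mul_ne_zero hd hd1),
          one_smul, div_mul_cancel₀ _ hd, add_sub_cancel_right]

end TwoDesign

/-- The least-squares estimator built from a 2-design reproduces any matrix exactly. -/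
theorem lse_two_design_reproduces
    {d M : ℕ} (ψ : Fin M → (Fin d → ℂ))
    (hunit : ∀ i, cinner (ψ i) (ψ i) = 1)
    (hdesign : ∀ X : Matrix (Fin d) (Fin d) ℂ,
      (1 / (M : ℂ)) • ∑ i, cinner (ψ i) (X.mulVec (ψ i)) • outer (ψ i) =
        (1 / ((d : ℂ) * ((d : ℂ) + 1))) • (X + X.trace • (1 : Matrix (Fin d) (Fin d) ℂ)))
    (ν : Fin M → Matrix (Fin d) (Fin d) ℂ)
    (hν : ∀ i, ν i = ((d : ℂ) * ((d : ℂ) + 1)) • outer (ψ i) -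
      (d : ℂ) • (1 : Matrix (Fin d) (Fin d) ℂ))
    (F : Matrix (Fin d) (Fin d) ℂ) :
    ∑ i, (cinner (ψ i) (F.mulVec (ψ i)) / (M : ℂ)) • ν i = F := by
  have hψ : IsTwoDesign ψ := by simpa only [IsTwoDesign, Fintype.card_fin] using hdesign
  simpa only [hν, Fintype.card_fin] using hψ.sum_smul_dual_eq hunit F
end

section
/- Let d ≥ 1, let μ be the Haar probability measure on the unitary group U(d) = Matrix.unitaryGroup (Fin d) ℂ, and let P : Matrix (Fin d) (Fin d) ℂ be a Hermitian matrix. Then ∫ U, ∫ V, ‖U P U† − V P V†‖_F² dμ(V) dμ(U) = 2·( Re trace(P·P) − (Re trace P)² / d ), where ‖·‖_F denotes the Frobenius (Hilbert–Schmidt) norm. -/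
/-!
Since `UPU†` and `VPV†` are Hermitian with `tr (UPU†)² = tr P²`, the integrand equals
`2 Re tr P² - 2 Re tr (UPU† VPV†)`. By left invariance of Haar measure, `M = ∫ VPV† dV` is fixed by
conjugation with every unitary; as the unitaries span all matrices, `M` is central, hence scalar,
and comparing traces gives `M = (tr P / d) • 1`. So the cross term averages to `(tr P)² / d`.
-/

open MeasureTheory
open scoped Matrix

noncomputable instance matrixMeasurableSpace {m n : Type*} : MeasurableSpace (Matrix m n ℂ) :=
  (inferInstance : MeasurableSpace (m → n → ℂ))

noncomputable def frobNorm {ι : Type*} [Fintype ι] (A : Matrix ι ι ℂ) : ℝ :=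
  Real.sqrt (∑ x, ∑ y, ‖A x y‖ ^ 2)

namespace Matrix

variable {n : Type*} [Fintype n]

theorem frobNorm_sq (A : Matrix n n ℂ) : frobNorm A ^ 2 = (Aᴴ * A).trace.re := by
  rw [frobNorm, Real.sq_sqrt (by positivity), trace, Complex.re_sum, Finset.sum_comm]
  refine Finset.sum_congr rfl fun i _ => ?_
  simp only [diag_apply, mul_apply, conjTranspose_apply, Complex.re_sum, RCLike.star_def,
    RCLike.conj_mul]
  norm_cast

theorem frobNorm_sub_sq_of_isHermitian {A B : Matrix n n ℂ} (hA : A.IsHermitian)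
    (hB : B.IsHermitian) :
    frobNorm (A - B) ^ 2 = (A * A).trace.re + (B * B).trace.re - 2 * (A * B).trace.re := by
  rw [frobNorm_sq, (hA.sub hB).eq, sub_mul, mul_sub, mul_sub, trace_sub, trace_sub, trace_sub,
    trace_mul_comm B A]
  simp only [Complex.sub_re]
  ring

theorem IsHermitian.ofReal_re_trace {P : Matrix n n ℂ} (hP : P.IsHermitian) :
    (P.trace.re : ℂ) = P.trace := by
  rw [← Complex.conj_eq_iff_re, ← Complex.star_def, ← trace_conjTranspose, hP.eq]

theorem eq_trace_div_smul_one_of_mem_range_scalar [DecidableEq n] {α : Type*} [Field α]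
    [CharZero α] {M : Matrix n n α} (hM : M ∈ Set.range (scalar n)) :
    M = (M.trace / Fintype.card n) • 1 := by
  obtain ⟨c, rfl⟩ := hM
  rcases isEmpty_or_nonempty n with _ | _
  · exact Subsingleton.elim _ _
  rw [scalar_apply, trace_diagonal, Finset.sum_const, Finset.card_univ, nsmul_eq_mul,
    mul_div_cancel_left₀ _ (by simp), smul_one_eq_diagonal]

variable [DecidableEq n]

theorem unitary_conj_mul_unitary_conj (U : unitaryGroup n ℂ) (A B : Matrix n n ℂ) :
    ((U : Matrix n n ℂ) * A * (U : Matrix n n ℂ)ᴴ) * ((U : Matrix n n ℂ) * B * (U : Matrix n n ℂ)ᴴ)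
      = (U : Matrix n n ℂ) * (A * B) * (U : Matrix n n ℂ)ᴴ := by
  simp only [mul_assoc, ← star_eq_conjTranspose]
  rw [← mul_assoc (star (U : Matrix n n ℂ)), UnitaryGroup.star_mul_self, one_mul]

theorem trace_unitary_conj (U : unitaryGroup n ℂ) (A : Matrix n n ℂ) :
    ((U : Matrix n n ℂ) * A * (U : Matrix n n ℂ)ᴴ).trace = A.trace := by
  rw [trace_mul_cycle, ← star_eq_conjTranspose, UnitaryGroup.star_mul_self, one_mul]

theorem isHermitian_unitary_conj {A : Matrix n n ℂ} (hA : A.IsHermitian) (U : unitaryGroup n ℂ) :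
    ((U : Matrix n n ℂ) * A * (U : Matrix n n ℂ)ᴴ).IsHermitian :=
  isHermitian_mul_mul_conjTranspose _ hA

theorem frobNorm_unitary_conj_sub_sq {P : Matrix n n ℂ} (hP : P.IsHermitian)
    (U V : unitaryGroup n ℂ) :
    frobNorm ((U : Matrix n n ℂ) * P * (U : Matrix n n ℂ)ᴴ -
        (V : Matrix n n ℂ) * P * (V : Matrix n n ℂ)ᴴ) ^ 2 =
      2 * (P * P).trace.re - 2 * (((U : Matrix n n ℂ) * P * (U : Matrix n n ℂ)ᴴ) *
        ((V : Matrix n n ℂ) * P * (V : Matrix n n ℂ)ᴴ)).trace.re := by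
  rw [frobNorm_sub_sq_of_isHermitian (isHermitian_unitary_conj hP U)
    (isHermitian_unitary_conj hP V), unitary_conj_mul_unitary_conj, unitary_conj_mul_unitary_conj,
    trace_unitary_conj, trace_unitary_conj]
  ring

section L2Operator

open scoped Norms.L2Operator

theorem mem_range_scalar_of_forall_unitary_conj {M : Matrix n n ℂ}
    (hM : ∀ U ∈ unitaryGroup n ℂ, U * M * star U = M) : M ∈ Set.range (scalar n) := by
  have hcomm (U) (hU : U ∈ unitaryGroup n ℂ) : Commute U M := calc
    U * M = U * M * star U * U := by
      rw [mul_assoc _ (star U), Unitary.star_mul_self_of_mem hU, mul_one]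
    _ = M * U := by rw [hM U hU]
  have hcenter : M ∈ Set.center (Matrix n n ℂ) := by
    refine Semigroup.mem_center_iff.mpr fun A => ?_
    have hA : A ∈ Submodule.span ℂ (unitary (Matrix n n ℂ) : Set (Matrix n n ℂ)) := by
      rw [CStarAlgebra.span_unitary]
      trivial
    induction hA using Submodule.span_induction with
    | mem U hU => exact (hcomm U hU).eq
    | zero => simp
    | add A B _ _ hA hB => rw [add_mul, mul_add, hA, hB]
    | smul c A _ hA => rw [smul_mul_assoc, mul_smul_comm, hA]
  obtain ⟨c, -, rfl⟩ := center_eq_scalar_image (n := n) (α := ℂ) ▸ hcenter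
  exact ⟨c, rfl⟩

theorem integral_trace {X : Type*} [MeasurableSpace X] {μ : Measure X}
    {f : X → Matrix n n ℂ} (hf : Integrable f μ) :
    ∫ x, (f x).trace ∂μ = (∫ x, f x ∂μ).trace :=
  (traceLinearMap n ℂ ℂ).toContinuousLinearMap.integral_comp_comm hf

end L2Operator

end Matrix

instance {m n : Type*} [Countable m] [Countable n] : BorelSpace (Matrix m n ℂ) :=
  Pi.borelSpace

instance {n : Type*} [Fintype n] [DecidableEq n] : BorelSpace (Matrix.unitaryGroup n ℂ) :=
  Subtype.borelSpace _

open scoped Matrix.Norms.L2Operator in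
instance {n : Type*} [Fintype n] [DecidableEq n] : CompactSpace (Matrix.unitaryGroup n ℂ) :=
  isCompact_iff_compactSpace.mp <| Metric.isCompact_of_isClosed_isBounded isClosed_unitary <|
    Metric.isBounded_closedBall (x := 0) (r := ‖(1 : Matrix n n ℂ)‖) |>.subset fun _ hU => by
      simpa using (CStarRing.norm_mem_unitary_mul 1 hU).le

theorem Continuous.integrable_of_compactSpace {X E : Type*} [TopologicalSpace X]
    [MeasurableSpace X] [OpensMeasurableSpace X] [CompactSpace X] {μ : Measure X}
    [IsFiniteMeasure μ] [NormedAddCommGroup E] {f : X → E} (hf : Continuous f) :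
    Integrable f μ :=
  hf.integrable_of_hasCompactSupport (.of_compactSpace f)

section HaarAverage

-- Matrix-valued Bochner integrals need some norm on matrices; all norms give the same integral.
open scoped Matrix.Norms.L2Operator

variable {n : Type*} [Fintype n] [DecidableEq n]

theorem integrable_unitary_conj (μ : Measure (Matrix.unitaryGroup n ℂ)) [IsFiniteMeasure μ]
    (P : Matrix n n ℂ) :
    Integrable (fun V : Matrix.unitaryGroup n ℂ => (V : Matrix n n ℂ) * P * (V : Matrix n n ℂ)ᴴ) μ :=
  Continuous.integrable_of_compactSpace (by fun_prop)

variable (μ : Measure (Matrix.unitaryGroup n ℂ)) [μ.IsMulLeftInvariant] [IsProbabilityMeasure μ]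

theorem integral_unitary_conj (P : Matrix n n ℂ) :
    ∫ V, (V : Matrix n n ℂ) * P * (V : Matrix n n ℂ)ᴴ ∂μ = (P.trace / Fintype.card n) • 1 := by
  set M := ∫ V, (V : Matrix n n ℂ) * P * (V : Matrix n n ℂ)ᴴ ∂μ with hM_def
  have hint := integrable_unitary_conj μ P
  have hinv (W) (hW : W ∈ Matrix.unitaryGroup n ℂ) : W * M * star W = M := by
    rw [hM_def, ← integral_const_mul_of_integrable hint,
      ← integral_mul_const_of_integrable (hint.const_mul W)]
    simpa [Matrix.star_eq_conjTranspose, Matrix.conjTranspose_mul, mul_assoc] using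
      integral_mul_left_eq_self (μ := μ)
        (fun V : Matrix.unitaryGroup n ℂ => (V : Matrix n n ℂ) * P * (V : Matrix n n ℂ)ᴴ) ⟨W, hW⟩
  have htrace : M.trace = P.trace := by
    rw [hM_def, ← Matrix.integral_trace hint]
    simp [Matrix.trace_unitary_conj]
  rw [Matrix.eq_trace_div_smul_one_of_mem_range_scalar
    (Matrix.mem_range_scalar_of_forall_unitary_conj hinv), htrace]

theorem integral_re_trace_mul_unitary_conj (A P : Matrix n n ℂ) :
    ∫ V, (A * ((V : Matrix n n ℂ) * P * (V : Matrix n n ℂ)ᴴ)).trace.re ∂μ =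
      (P.trace / Fintype.card n * A.trace).re := by
  have hint := integrable_unitary_conj μ P
  simp_rw [← RCLike.re_eq_complex_re]
  rw [integral_re (Continuous.integrable_of_compactSpace (by fun_prop)),
    Matrix.integral_trace (hint.const_mul A), integral_const_mul_of_integrable hint,
    integral_unitary_conj, Matrix.mul_smul, mul_one, Matrix.trace_smul, smul_eq_mul]

theorem integral_frobNorm_unitary_conj_sub_sq {P : Matrix n n ℂ} (hP : P.IsHermitian)
    (U : Matrix.unitaryGroup n ℂ) :
    ∫ V, frobNorm ((U : Matrix n n ℂ) * P * (U : Matrix n n ℂ)ᴴ -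
        (V : Matrix n n ℂ) * P * (V : Matrix n n ℂ)ᴴ) ^ 2 ∂μ =
      2 * ((P * P).trace.re - P.trace.re ^ 2 / Fintype.card n) := by
  have hint : Integrable (fun V : Matrix.unitaryGroup n ℂ =>
      (((U : Matrix n n ℂ) * P * (U : Matrix n n ℂ)ᴴ) *
        ((V : Matrix n n ℂ) * P * (V : Matrix n n ℂ)ᴴ)).trace.re) μ :=
    Continuous.integrable_of_compactSpace (by fun_prop)
  simp_rw [Matrix.frobNorm_unitary_conj_sub_sq hP U, integral_sub (integrable_const _)
    (hint.const_mul 2), integral_const_mul, integral_re_trace_mul_unitary_conj,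
    Matrix.trace_unitary_conj]
  rw [← hP.ofReal_re_trace]
  simp only [integral_const, probReal_univ, smul_eq_mul, one_mul, Complex.mul_re,
    Complex.div_natCast_re, Complex.ofReal_re, Complex.div_natCast_im, Complex.ofReal_im, zero_div,
    mul_zero, sub_zero]
  ring

end HaarAverage

theorem haar_average_frobenius_sq_general
    {d : ℕ}
    (μ : Measure (Matrix.unitaryGroup (Fin d) ℂ))
    [μ.IsHaarMeasure] [IsProbabilityMeasure μ]
    (P : Matrix (Fin d) (Fin d) ℂ) (hP : Pᴴ = P) :
    (∫ U : Matrix.unitaryGroup (Fin d) ℂ, ∫ V : Matrix.unitaryGroup (Fin d) ℂ,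
        (frobNorm ((U : Matrix (Fin d) (Fin d) ℂ) * P * (U : Matrix (Fin d) (Fin d) ℂ)ᴴ -
          (V : Matrix (Fin d) (Fin d) ℂ) * P * (V : Matrix (Fin d) (Fin d) ℂ)ᴴ)) ^ 2 ∂μ ∂μ) =
      2 * (((P * P).trace).re - ((P.trace).re) ^ 2 / (d : ℝ)) := by
  simp_rw [integral_frobNorm_unitary_conj_sub_sq μ hP, Fintype.card_fin]
  simp

/-- Haar average of the squared Frobenius distance between two independent
random rotations of a Hermitian matrix. -/
theorem haar_average_frobenius_sq
    {d : ℕ} (hd : 1 ≤ d)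
    (μ : Measure (Matrix.unitaryGroup (Fin d) ℂ))
    [μ.IsHaarMeasure] [IsProbabilityMeasure μ]
    (P : Matrix (Fin d) (Fin d) ℂ) (hP : Pᴴ = P) :
    (∫ U : Matrix.unitaryGroup (Fin d) ℂ, ∫ V : Matrix.unitaryGroup (Fin d) ℂ,
        (frobNorm ((U : Matrix (Fin d) (Fin d) ℂ) * P * (U : Matrix (Fin d) (Fin d) ℂ)ᴴ -
          (V : Matrix (Fin d) (Fin d) ℂ) * P * (V : Matrix (Fin d) (Fin d) ℂ)ᴴ)) ^ 2 ∂μ ∂μ) =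
      2 * (((P * P).trace).re - ((P.trace).re) ^ 2 / (d : ℝ)) :=
  haar_average_frobenius_sq_general μ P hP
end
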